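/- RCUs bound: For a channel P_{Y|X}, input distribution P_X, decoding metric q, and any s ≥ 0 and integer M ≥ 2, there exists a code with M codewords (codewords drawn i.i.d. from P_X) whose average error probability under the maximum-metric decoder is upper bounded by E[ exp( −[ i_s(X, Y) − log(M−1) ]⁺ ) ], where i_s is the generalized information density and [a]⁺ = max{0, a}. -/

import Mathlib

/-!
Draw the `M` codewords i.i.d. from `P_X`. Given the transmitted codeword `x` and the channel
output `y`, the `M - 1` competitors are still i.i.d. `P_X`, so the union bound, capped at `1`,
bounds the conditional error probability by `min 1 ((M - 1) * P_X {x' | q x y ≤ q x' y})`.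
Markov's inequality for `q (·) y ^ s` bounds that pairwise probability by
`E[q X' y ^ s] / q x y ^ s = exp (-i_s x y)`, and
`min 1 ((M - 1) * exp (-i)) = exp (-max 0 (i - log (M - 1)))`. Averaging over messages and
codebooks, some codebook is no worse than the average.
-/

open MeasureTheory ProbabilityTheory

/-- Generalized information density for decoding metric `q` at parameter `s`. -/
noncomputable def genInfoDensity {X Y : Type*} [MeasurableSpace X]
    (P_X : Measure X) (q : X → Y → ℝ) (s : ℝ) (x : X) (y : Y) : ℝ :=
  Real.log (q x y ^ s / ∫ x', q x' y ^ s ∂P_X)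

open scoped ENNReal

section Pi

variable {α : Type*} [MeasurableSpace α]

theorem measure_pi_exists_mem_le {n : ℕ} (μ : Measure α) [IsProbabilityMeasure μ]
    {A : Set α} (hA : MeasurableSet A) :
    Measure.pi (fun _ : Fin n => μ) {b | ∃ k, b k ∈ A} ≤ min 1 (n * μ A) := by
  refine le_min prob_le_one ?_
  calc Measure.pi (fun _ : Fin n => μ) {b | ∃ k, b k ∈ A}
      = Measure.pi (fun _ : Fin n => μ) (⋃ k, Function.eval k ⁻¹' A) := by
        rw [Set.ofPred_exists]; rfl
    _ ≤ ∑ k, Measure.pi (fun _ : Fin n => μ) (Function.eval k ⁻¹' A) :=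
        measure_iUnion_fintype_le _ _
    _ = n * μ A := by
        simp [(measurePreserving_eval (fun _ : Fin n => μ) _).measure_preimage hA.nullMeasurableSet]

theorem lintegral_pi_eq_lintegral_insertNth {n : ℕ} (μ : Measure α) [SigmaFinite μ]
    (i : Fin (n + 1)) {F : (Fin (n + 1) → α) → ℝ≥0∞} (hF : Measurable F) :
    ∫⁻ c, F c ∂Measure.pi (fun _ => μ)
      = ∫⁻ x, ∫⁻ b, F (i.insertNth x b) ∂Measure.pi (fun _ => μ) ∂μ := by
  have e := (measurePreserving_piFinSuccAbove (fun _ : Fin (n + 1) => μ) i).symm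
  rw [← e.lintegral_comp hF]
  exact lintegral_prod _ (hF.comp e.measurable).aemeasurable

end Pi

theorem Real.exp_neg_max_zero_log_sub_log {t K : ℝ} (ht : 0 < t) (hK : 0 < K) :
    Real.exp (-max 0 (Real.log t - Real.log K)) = min 1 (K / t) := by
  rw [neg_sup, Real.exp_monotone.map_min, neg_zero, Real.exp_zero, neg_sub,
    ← Real.log_div hK.ne' ht.ne', Real.exp_log (div_pos hK ht)]

section MaxMetricDecoding

variable {α β : Type*} {q : α → β → ℝ}

def maxMetricErrorSet {M : ℕ} (q : α → β → ℝ) (c : Fin M → α) (m : Fin M) : Set β :=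
  {y | ∃ j, j ≠ m ∧ q (c m) y ≤ q (c j) y}

theorem maxMetricErrorSet_insertNth {n : ℕ} (m : Fin (n + 1)) (x : α) (b : Fin n → α) :
    maxMetricErrorSet q (m.insertNth x b) m = {y | ∃ k, q x y ≤ q (b k) y} := by
  ext y
  simp [maxMetricErrorSet, Fin.exists_iff_succAbove m, Fin.succAbove_ne]

variable [MeasurableSpace α] [MeasurableSpace β]

theorem measurableSet_metric_le (hq : Measurable fun p : α × β => q p.1 p.2)
    {γ : Type*} [MeasurableSpace γ] {f g : γ → α} {h : γ → β}
    (hf : Measurable f) (hg : Measurable g) (hh : Measurable h) :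
    MeasurableSet {z | q (f z) (h z) ≤ q (g z) (h z)} :=
  measurableSet_le (hq.comp (hf.prodMk hh)) (hq.comp (hg.prodMk hh))

theorem measurable_kernel_maxMetricErrorSet (κ : Kernel α β) [IsSFiniteKernel κ]
    (hq : Measurable fun p : α × β => q p.1 p.2) {M : ℕ} (m : Fin M) :
    Measurable fun c : Fin M → α => κ (c m) (maxMetricErrorSet q c m) := by
  have hE : MeasurableSet {z : (Fin M → α) × β | ∃ j, j ≠ m ∧ q (z.1 m) z.2 ≤ q (z.1 j) z.2} := by
    simp only [Set.ofPred_exists, Set.ofPred_and]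
    exact .iUnion fun j => (MeasurableSet.const _).inter
      (measurableSet_metric_le hq (by fun_prop) (by fun_prop) measurable_snd)
  exact (κ.comap (fun c => c m) (measurable_pi_apply m)).measurable_kernel_prodMk_left hE

theorem measurable_measure_metric_le (P : Measure α) [SFinite P]
    (hq : Measurable fun p : α × β => q p.1 p.2) :
    Measurable fun p : α × β => P {x' | q p.1 p.2 ≤ q x' p.2} :=
  measurable_measure_prodMk_left
    (measurableSet_metric_le hq (f := fun z : (α × β) × α => z.1.1) (g := Prod.snd)
      (h := fun z => z.1.2) (by fun_prop) measurable_snd (by fun_prop))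

theorem lintegral_kernel_maxMetricErrorSet_le (P : Measure α) [IsProbabilityMeasure P]
    (κ : Kernel α β) [IsMarkovKernel κ] (hq : Measurable fun p : α × β => q p.1 p.2)
    {n : ℕ} (m : Fin (n + 1)) :
    ∫⁻ c, κ (c m) (maxMetricErrorSet q c m) ∂Measure.pi (fun _ => P)
      ≤ ∫⁻ p, min 1 (n * P {x' | q p.1 p.2 ≤ q x' p.2}) ∂(P ⊗ₘ κ) := by
  rw [lintegral_pi_eq_lintegral_insertNth P m (measurable_kernel_maxMetricErrorSet κ hq m),
    Measure.lintegral_compProd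
      (measurable_const.min ((measurable_measure_metric_le P hq).const_mul _))]
  refine lintegral_mono fun x => ?_
  simp only [Fin.insertNth_apply_same, maxMetricErrorSet_insertNth]
  have hW : MeasurableSet {z : (Fin n → α) × β | ∃ k, q x z.2 ≤ q (z.1 k) z.2} := by
    simp only [Set.ofPred_exists]
    exact .iUnion fun k => measurableSet_metric_le hq measurable_const (by fun_prop) measurable_snd
  calc ∫⁻ b, κ x {y | ∃ k, q x y ≤ q (b k) y} ∂Measure.pi (fun _ => P)
      = ((Measure.pi fun _ => P).prod (κ x)) {z | ∃ k, q x z.2 ≤ q (z.1 k) z.2} :=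
        (Measure.prod_apply hW).symm
    _ = ∫⁻ y, Measure.pi (fun _ => P) {b | ∃ k, q x y ≤ q (b k) y} ∂κ x :=
        Measure.prod_apply_symm hW
    _ ≤ _ := lintegral_mono fun y =>
        measure_pi_exists_mem_le P (measurableSet_metric_le hq measurable_const measurable_id
          measurable_const)

end MaxMetricDecoding

theorem exists_sum_le_card_mul_of_lintegral_le {ι Ω : Type*} [Fintype ι] [MeasurableSpace Ω]
    (μ : Measure Ω) [IsProbabilityMeasure μ] {f : ι → Ω → ℝ≥0∞} (hf : ∀ i, Measurable (f i))
    {B : ℝ≥0∞} (h : ∀ i, ∫⁻ ω, f i ω ∂μ ≤ B) : ∃ ω, ∑ i, f i ω ≤ Fintype.card ι * B := by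
  obtain ⟨ω, hω⟩ :=
    exists_le_lintegral (μ := μ) (Finset.measurable_sum _ fun i _ => hf i).aemeasurable
  refine ⟨ω, hω.trans ?_⟩
  rw [lintegral_finsetSum _ fun i _ => hf i]
  simpa using Finset.sum_le_sum fun i (_ : i ∈ Finset.univ) => h i

section InformationDensity

variable {α β : Type*} [MeasurableSpace α] {q : α → β → ℝ}

theorem metric_rpow_mul_measureReal_le_integral (P : Measure α) [IsFiniteMeasure P]
    (hq_nonneg : ∀ x y, 0 ≤ q x y) {s : ℝ} (hs : 0 ≤ s) (x : α) (y : β)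
    (hint : Integrable (fun x' => q x' y ^ s) P) :
    q x y ^ s * P.real {x' | q x y ≤ q x' y} ≤ ∫ x', q x' y ^ s ∂P :=
  calc q x y ^ s * P.real {x' | q x y ≤ q x' y}
      ≤ q x y ^ s * P.real {x' | q x y ^ s ≤ q x' y ^ s} := by
        refine mul_le_mul_of_nonneg_left (measureReal_mono fun x' hx' => ?_)
          (Real.rpow_nonneg (hq_nonneg x y) s)
        exact Real.rpow_le_rpow (hq_nonneg x y) hx' hs
    _ ≤ ∫ x', q x' y ^ s ∂P :=
        mul_meas_ge_le_integral_of_nonneg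
          (ae_of_all _ fun x' => Real.rpow_nonneg (hq_nonneg x' y) s) hint _

theorem min_one_mul_measureReal_le_exp (P : Measure α) [IsFiniteMeasure P]
    (hq_nonneg : ∀ x y, 0 ≤ q x y) {s : ℝ} (hs : 0 ≤ s) {K : ℝ} (hK : 1 ≤ K) (x : α) (y : β)
    (hint : Integrable (fun x' => q x' y ^ s) P) :
    min 1 (K * P.real {x' | q x y ≤ q x' y})
      ≤ Real.exp (-max 0 (genInfoDensity P q s x y - Real.log K)) := by
  have ha : 0 ≤ q x y ^ s := Real.rpow_nonneg (hq_nonneg x y) s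
  have hZ : 0 ≤ ∫ x', q x' y ^ s ∂P :=
    integral_nonneg fun x' => Real.rpow_nonneg (hq_nonneg x' y) s
  rcases (div_nonneg ha hZ).eq_or_lt with h0 | hpos
  · -- a vanishing ratio makes `genInfoDensity` the junk value `log 0 = 0`
    rw [genInfoDensity, ← h0, Real.log_zero, zero_sub,
      max_eq_left (neg_nonpos.2 (Real.log_nonneg hK)), neg_zero, Real.exp_zero]
    exact min_le_left _ _
  · have ha' : 0 < q x y ^ s := ha.lt_of_ne fun h => by simp [← h] at hpos
    rw [genInfoDensity, Real.exp_neg_max_zero_log_sub_log hpos (by linarith), div_div_eq_mul_div,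
      mul_div_assoc]
    gcongr
    rw [le_div_iff₀ ha', mul_comm]
    exact metric_rpow_mul_measureReal_le_integral P hq_nonneg hs x y hint

theorem min_one_mul_measure_le_ofReal_exp (P : Measure α) [IsFiniteMeasure P]
    (hq_nonneg : ∀ x y, 0 ≤ q x y) {s : ℝ} (hs : 0 ≤ s) {n : ℕ} (hn : 1 ≤ n) (x : α) (y : β)
    (hint : Integrable (fun x' => q x' y ^ s) P) :
    min 1 (n * P {x' | q x y ≤ q x' y})
      ≤ ENNReal.ofReal (Real.exp (-max 0 (genInfoDensity P q s x y - Real.log n))) := by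
  rw [← ofReal_measureReal, ← ENNReal.ofReal_natCast, ← ENNReal.ofReal_mul (Nat.cast_nonneg _),
    ← ENNReal.ofReal_one, ← ENNReal.ofReal_min]
  exact ENNReal.ofReal_le_ofReal
    (min_one_mul_measureReal_le_exp P hq_nonneg hs (by exact_mod_cast hn) x y hint)

variable [MeasurableSpace β]

theorem measurable_genInfoDensity (P : Measure α) [SFinite P]
    (hq : Measurable fun p : α × β => q p.1 p.2) (s : ℝ) :
    Measurable fun p : α × β => genInfoDensity P q s p.1 p.2 := by
  have hZ : Measurable fun y : β => ∫ x', q x' y ^ s ∂P :=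
    ((hq.comp measurable_swap).pow_const s).stronglyMeasurable.integral_prod_right'.measurable
  exact ((hq.pow_const s).div (hZ.comp measurable_snd)).log

theorem integrable_metric_rpow (P : Measure α) [IsFiniteMeasure P] {C : ℝ}
    (hq : Measurable fun p : α × β => q p.1 p.2)
    (hq_nonneg : ∀ x y, 0 ≤ q x y) (hq_bdd : ∀ x y, q x y ≤ C) {s : ℝ} (hs : 0 ≤ s) (y : β) :
    Integrable (fun x => q x y ^ s) P := by
  have hm : Measurable fun x => q x y ^ s :=
    (hq.comp (measurable_id.prodMk measurable_const)).pow_const s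
  refine .of_bound hm.aestronglyMeasurable (C ^ s) (ae_of_all _ fun x => ?_)
  rw [Real.norm_of_nonneg (Real.rpow_nonneg (hq_nonneg x y) s)]
  exact Real.rpow_le_rpow (hq_nonneg x y) (hq_bdd x y) hs

theorem integrable_exp_neg_max_zero_sub (P : Measure α) [SFinite P] {μ : Measure (α × β)}
    [IsFiniteMeasure μ] (hq : Measurable fun p : α × β => q p.1 p.2) (s a : ℝ) :
    Integrable (fun p => Real.exp (-max 0 (genInfoDensity P q s p.1 p.2 - a))) μ := by
  have hi := measurable_genInfoDensity P hq s
  refine .of_bound (by fun_prop) 1 (ae_of_all _ fun p => ?_)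
  rw [Real.norm_of_nonneg (Real.exp_pos _).le, Real.exp_le_one_iff, neg_nonpos]
  exact le_max_left _ _

end InformationDensity

/-- RCUs bound: for any channel `κ`, input distribution `P_X`, bounded
nonnegative decoding metric `q`, `s ≥ 0` and `M ≥ 2`, there exists a code with
`M` codewords whose average error probability under the maximum-metric decoder
(ties counted as errors) is at most
`E[ exp( −[ i_s(X,Y) − log(M−1) ]⁺ ) ]`. -/
theorem rcus_bound {X Y : Type*} [MeasurableSpace X] [MeasurableSpace Y]
    (P_X : Measure X) [IsProbabilityMeasure P_X]
    (κ : Kernel X Y) [IsMarkovKernel κ]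
    (q : X → Y → ℝ) (C : ℝ)
    (hq_meas : Measurable fun p : X × Y => q p.1 p.2)
    (hq_nonneg : ∀ x y, 0 ≤ q x y) (hq_bdd : ∀ x y, q x y ≤ C)
    (s : ℝ) (hs : 0 ≤ s) (M : ℕ) (hM : 2 ≤ M) :
    ∃ c : Fin M → X,
      (1 / M : ℝ) * ∑ m, ((κ (c m)) {y | ∃ j, j ≠ m ∧ q (c m) y ≤ q (c j) y}).toReal
        ≤ ∫ p, Real.exp (-max 0 (genInfoDensity P_X q s p.1 p.2 - Real.log (M - 1)))
            ∂(P_X ⊗ₘ κ) := by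
  obtain ⟨n, rfl⟩ : ∃ n, M = n + 1 := ⟨M - 1, by omega⟩
  have hn : 1 ≤ n := by omega
  rw [show ((n + 1 : ℕ) : ℝ) - 1 = n by push_cast; ring]
  set B := ∫ p, Real.exp (-max 0 (genInfoDensity P_X q s p.1 p.2 - Real.log n)) ∂(P_X ⊗ₘ κ)
  have hrcu : ∀ m : Fin (n + 1),
      ∫⁻ c, κ (c m) (maxMetricErrorSet q c m) ∂Measure.pi (fun _ => P_X) ≤ ENNReal.ofReal B :=
    fun m => calc
      _ ≤ ∫⁻ p, min 1 (n * P_X {x' | q p.1 p.2 ≤ q x' p.2}) ∂(P_X ⊗ₘ κ) :=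
        lintegral_kernel_maxMetricErrorSet_le P_X κ hq_meas m
      _ ≤ ∫⁻ p, ENNReal.ofReal
            (Real.exp (-max 0 (genInfoDensity P_X q s p.1 p.2 - Real.log n))) ∂(P_X ⊗ₘ κ) :=
        lintegral_mono fun p =>
          min_one_mul_measure_le_ofReal_exp P_X hq_nonneg hs hn p.1 p.2
            (integrable_metric_rpow P_X hq_meas hq_nonneg hq_bdd hs p.2)
      _ = ENNReal.ofReal B :=
        (ofReal_integral_eq_lintegral_ofReal (integrable_exp_neg_max_zero_sub P_X hq_meas s _)
          (ae_of_all _ fun _ => (Real.exp_pos _).le)).symm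
  obtain ⟨c, hc⟩ := exists_sum_le_card_mul_of_lintegral_le _
    (fun m => measurable_kernel_maxMetricErrorSet κ hq_meas m) hrcu
  refine ⟨c, ?_⟩
  have hsum := ENNReal.toReal_mono (by finiteness) hc
  rw [ENNReal.toReal_sum fun m _ => measure_ne_top _ _, ENNReal.toReal_mul,
    ENNReal.toReal_ofReal (integral_nonneg fun _ => (Real.exp_pos _).le)] at hsum
  simp only [Fintype.card_fin, ENNReal.toReal_natCast] at hsum
  rw [one_div, inv_mul_le_iff₀ (by positivity)]
  exact hsum
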